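/- arXiv:2312.16954 — 4 statements merged into one kernel-verified Lean document; each statement's English description precedes it below -/
import Mathlib

section
/- Credential verification (second equation): For all r_u, x, y, x_u, r', r in ZMod p with r ≠ 0, set a = r_u • g, b = y • a, c = x • a + (x_u * r_u * x * y) • g, X = x • g, ã = r' • a, b̃ = r' • b, ĉ = (r' * r) • c. Then e(X, ã) + x_u • e(X, b̃) = r⁻¹ • e(g, ĉ). (This is the paper's correctness equation e(X,ã) · e(X,b̃)^{x_u} = e(g,ĉ)^{r^{-1}} verifying possession of a credential on the secret key x_u.) -/
/-- Credential verification (second equation) for the randomized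
Camenisch–Lysyanskaya credential. -/
theorem credential_verify_second_eq
    {p : ℕ} [Fact p.Prime] {G GT : Type*} [AddCommGroup G] [AddCommGroup GT]
    [Module (ZMod p) G] [Module (ZMod p) GT]
    (e : G →ₗ[ZMod p] G →ₗ[ZMod p] GT) (g : G)
    (r_u x y x_u r' r : ZMod p) (hr : r ≠ 0)
    (a b c X atil btil chat : G)
    (ha : a = r_u • g) (hb : b = y • a)
    (hc : c = x • a + (x_u * r_u * x * y) • g) (hX : X = x • g)
    (hat : atil = r' • a) (hbt : btil = r' • b) (hch : chat = (r' * r) • c) :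
    e X atil + x_u • e X btil = r⁻¹ • e g chat := by
  subst ha hb hc hX hat hbt hch
  simp only [map_smul, map_add, LinearMap.smul_apply, LinearMap.add_apply, smul_smul,
    smul_add, ← add_smul]
  congr 1
  field_simp
end

section
/- Trapdoor unblinding correctness: Let u0, u1, u2, u3, r1', r2', r̂1, r̂2, t0, t1, t2, t3, t4, ω be elements of ZMod p with u3 ≠ 0, r1' ≠ 0 and r2' ≠ 0, and let g0, g1 be elements of G. Set H' = u3 • (g0 + ω • g1), x0 = r̂1 * r1' * t1 * t2 + r̂2 * r2' * t3 * t4 + u0, x1 = −(u3 * r1'⁻¹) * (t0 * t2) + u1, x2 = −(u3 * r1'⁻¹) * (t0 * t1) + u2, and let d0' = x0 • g, d1' = x1 • g − (r̂1 * t2) • H', d2' = x2 • g − (r̂1 * t1) • H', d3' = −(r̂2 * t4) • H', d4' = −(r̂2 * t3) • H'. Then: d0' − u0 • g = (r̂1 * r1' * t1 * t2 + r̂2 * r2' * t3 * t4) • g; (r1' * u3⁻¹) • (d1' − u1 • g) = −(t0 * t2) • g − (r̂1 * r1' * t2) • (g0 + ω • g1); (r1' * u3⁻¹) • (d2' − u2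 • g) = −(t0 * t1) • g − (r̂1 * r1' * t1) • (g0 + ω • g1); (r2' * u3⁻¹) • d3' = −(r̂2 * r2' * t4) • (g0 + ω • g1); and (r2' * u3⁻¹) • d4' = −(r̂2 * r2' * t3) • (g0 + ω • g1). (This says that the data user's unblinding of the blinded values (d0',…,d4') returned by the trapdoor generation center yields exactly the honest trapdoor for keyword ω.) -/
/-- Trapdoor unblinding correctness: unblinding the blinded values returned by
the trapdoor generation center yields exactly the honest trapdoor for ω. -/
theorem trapdoor_unblinding_correctness
    {p : ℕ} [Fact p.Prime] {G : Type*} [AddCommGroup G] [Module (ZMod p) G]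
    (g : G)
    (u0 u1 u2 u3 r1' r2' r1hat r2hat t0 t1 t2 t3 t4 ω : ZMod p)
    (hu3 : u3 ≠ 0) (hr1 : r1' ≠ 0) (hr2 : r2' ≠ 0)
    (g0 g1 : G)
    (H' : G) (x0 x1 x2 : ZMod p) (d0' d1' d2' d3' d4' : G)
    (hH' : H' = u3 • (g0 + ω • g1))
    (hx0 : x0 = r1hat * r1' * t1 * t2 + r2hat * r2' * t3 * t4 + u0)
    (hx1 : x1 = -(u3 * r1'⁻¹) * (t0 * t2) + u1)
    (hx2 : x2 = -(u3 * r1'⁻¹) * (t0 * t1) + u2)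
    (hd0' : d0' = x0 • g)
    (hd1' : d1' = x1 • g - (r1hat * t2) • H')
    (hd2' : d2' = x2 • g - (r1hat * t1) • H')
    (hd3' : d3' = -(r2hat * t4) • H')
    (hd4' : d4' = -(r2hat * t3) • H') :
    d0' - u0 • g = (r1hat * r1' * t1 * t2 + r2hat * r2' * t3 * t4) • g ∧
    (r1' * u3⁻¹) • (d1' - u1 • g)
      = -(t0 * t2) • g - (r1hat * r1' * t2) • (g0 + ω • g1) ∧
    (r1' * u3⁻¹) • (d2' - u2 • g)
      = -(t0 * t1) • g - (r1hat * r1' * t1) • (g0 + ω • g1) ∧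
    (r2' * u3⁻¹) • d3' = -(r2hat * r2' * t4) • (g0 + ω • g1) ∧
    (r2' * u3⁻¹) • d4' = -(r2hat * r2' * t3) • (g0 + ω • g1) := by
  subst hH' hx0 hx1 hx2 hd0' hd1' hd2' hd3' hd4'
  refine ⟨by match_scalars <;> ring, ?_, ?_, ?_, ?_⟩ <;>
    · match_scalars <;> field_simp <;> ring
end

section
/- Completeness of the Π2 verification equation on the pairing side: Let M be an additive commutative group that is a module over ZMod p. Let v_s, v_x, v_xy be elements of M and let r, x_u, x_u', k', c be elements of ZMod p with r ≠ 0, such that r⁻¹ • v_s = v_x + x_u • v_xy. Set v_x' = k' • v_s − x_u' • v_xy, k̂ = k' − c * r⁻¹ and x̂_u = x_u' − c * x_u. Then k̂ • v_s − x̂_u • v_xy + c • v_x = v_x'. (This is the verifier's check v_x' = v_s^{k̂} · v_xy^{−x̂_u} · v_x^c for the credential-possession relation v_s^{r^{-1}} = v_x · v_xy^{x_u}, where v_s = e(g,ĉ), v_x = e(X,ã), v_xy = e(X,b̃) live in the target group G_T.) -/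
/-- Completeness of the Π2 verification equation on the pairing side. -/
theorem pi2_pairing_side_completeness
    {p : ℕ} [Fact p.Prime] {M : Type*} [AddCommGroup M] [Module (ZMod p) M]
    (v_s v_x v_xy : M) (r x_u x_u' k' c : ZMod p) (hr : r ≠ 0)
    (hrel : r⁻¹ • v_s = v_x + x_u • v_xy)
    (v_x' : M) (khat xhat_u : ZMod p)
    (hvx' : v_x' = k' • v_s - x_u' • v_xy)
    (hkhat : khat = k' - c * r⁻¹)
    (hxhat : xhat_u = x_u' - c * x_u) :
    khat • v_s - xhat_u • v_xy + c • v_x = v_x' := by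
  subst hvx' hkhat hxhat
  have h : c • (r⁻¹ • v_s) = c • v_x + c • (x_u • v_xy) := by rw [hrel, smul_add]
  rw [sub_smul, sub_smul, mul_smul, mul_smul]
  linear_combination (norm := abel) -h
end

section
/- Soundness of the credential verification equations (used in the unforgeability and traceability reductions): Assume that the map from ZMod p to G_T sending λ to λ • e(g, g) is injective. Let x, y, x_u, α, β, γ be elements of ZMod p and set ã = α • g, b̃ = β • g, c0 = γ • g, X = x • g, Y = y • g. If e(ã, Y) = e(g, b̃) and e(g, c0) = e(X, ã) + x_u • e(X, b̃), then β = α * y and γ = α * (x + x_u * x * y); consequently b̃ = y • ã and c0 = (x + x_u * x * y) • ã, i.e. (ã, b̃, c0) is a valid Camenisch–Lysyanskaya signature on x_u under the public key (X, Y). (This is the extraction step in the proof of Theorem 3, where a record forger yields an LRSW forgery (x_u, ã, b̃, ĉ^{r^{-1}}).) -/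
/-- Soundness of the credential verification equations: a record passing the
two pairing checks yields a valid Camenisch–Lysyanskaya signature on x_u. -/
theorem credential_verification_soundness
    {p : ℕ} [Fact p.Prime] {G GT : Type*} [AddCommGroup G] [AddCommGroup GT]
    [Module (ZMod p) G] [Module (ZMod p) GT]
    (e : G →ₗ[ZMod p] G →ₗ[ZMod p] GT) (g : G)
    (hinj : Function.Injective (fun lam : ZMod p => lam • e g g))
    (x y x_u α β γ : ZMod p)
    (atil btil c0 X Y : G)
    (hat : atil = α • g) (hbt : btil = β • g) (hc0 : c0 = γ • g)
    (hX : X = x • g) (hY : Y = y • g)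
    (h1 : e atil Y = e g btil)
    (h2 : e g c0 = e X atil + x_u • e X btil) :
    β = α * y ∧ γ = α * (x + x_u * x * y) ∧
    btil = y • atil ∧ c0 = (x + x_u * x * y) • atil := by
  subst hat hbt hc0 hX hY
  simp only [map_smul, LinearMap.smul_apply, smul_smul] at h1 h2
  have hβ : β = α * y := by have := hinj h1.symm; rw [this]; ring
  have hγ : γ = α * (x + x_u * x * y) := by
    have h2' : γ • e g g = (α * x + x_u * (β * x)) • e g g := by
      rw [add_smul]; simpa using h2
    have := hinj h2'
    rw [this, hβ]; ring
  refine ⟨hβ, hγ, ?_, ?_⟩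
  · rw [hβ, smul_smul]; ring_nf
  · rw [hγ, smul_smul]; ring_nf
end
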